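/- arXiv:2501.06512 — 4 statements merged into one kernel-verified Lean document; each statement's English description precedes it below -/
import Mathlib

section
/- For all integers λ and ν with 0 ≤ ν ≤ λ, the generalized continuants satisfy d'Ocagne's identities: A_λ · B_{ν−1,λ−ν} = A_{λ−1} · B_{ν,λ−ν} + (−1)^{ν−1} · (a_λ·a_{λ−1}⋯a_{λ−ν+1}) · A_{λ−ν−1}, and B_λ · B_{ν−1,λ−ν} = B_{λ−1} · B_{ν,λ−ν} + (−1)^{ν−1} · (a_λ·a_{λ−1}⋯a_{λ−ν+1}) · B_{λ−ν−1} (the product over a is empty, i.e. equal to 1, when ν = 0). -/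
/-!
Fix the starting index `s = λ - ν`. The sequences `n ↦ C (s + n - 1)`, for `C = A · 0` or
`C = B · 0`, and `n ↦ B (n - 1) s` solve the same three-term recurrence, so their Casoratian is
multiplied by `-a (s + n + 1)` at each step. It starts at `-C (s - 1)`, which gives d'Ocagne's
identity.
-/

open Finset

section Casoratian

variable {R : Type*} [CommRing R]

def casoratian (u v : ℕ → R) (n : ℕ) : R :=
  u (n + 1) * v n - u n * v (n + 1)

theorem casoratian_succ {p q u v : ℕ → R}
    (hu : ∀ n, u (n + 2) = p (n + 2) * u (n + 1) + q (n + 2) * u n)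
    (hv : ∀ n, v (n + 2) = p (n + 2) * v (n + 1) + q (n + 2) * v n) (n : ℕ) :
    casoratian u v (n + 1) = -q (n + 2) * casoratian u v n := by
  unfold casoratian
  rw [hu, hv]
  ring

theorem casoratian_eq {p q u v : ℕ → R}
    (hu : ∀ n, u (n + 2) = p (n + 2) * u (n + 1) + q (n + 2) * u n)
    (hv : ∀ n, v (n + 2) = p (n + 2) * v (n + 1) + q (n + 2) * v n) (n : ℕ) :
    casoratian u v n = (-1) ^ n * (∏ k ∈ range n, q (k + 2)) * casoratian u v 0 := by
  induction n with
  | zero => simp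
  | succ n ih =>
    rw [casoratian_succ hu hv, ih, prod_range_succ, pow_succ]
    ring

end Casoratian

theorem docagne_of_recurrence (a b C : ℤ → ℤ) (B : ℤ → ℤ → ℤ)
    (hBm1 : ∀ l : ℤ, 0 ≤ l → B (-1) l = 0) (hB0 : ∀ l : ℤ, 0 ≤ l → B 0 l = 1)
    (hBrec : ∀ l ν : ℤ, 0 ≤ l → 1 ≤ ν →
      B ν l = b (l + ν) * B (ν - 1) l + a (l + ν) * B (ν - 2) l)
    (hCrec : ∀ ν : ℤ, 1 ≤ ν → C ν = b ν * C (ν - 1) + a ν * C (ν - 2))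
    (lam nu : ℕ) (hle : nu ≤ lam) :
    C lam * B (nu - 1) (lam - nu) =
      C (lam - 1) * B nu (lam - nu) +
        (-1) ^ (nu + 1) * (∏ i ∈ range nu, a (lam - i)) * C (lam - nu - 1) := by
  obtain ⟨s, rfl⟩ := Nat.exists_eq_add_of_le' hle
  set u : ℕ → ℤ := fun n => C (s + n - 1)
  set v : ℕ → ℤ := fun n => B (n - 1) s
  have hu : ∀ n, u (n + 2) = b (s + (n + 2 : ℕ) - 1) * u (n + 1) + a (s + (n + 2 : ℕ) - 1) * u n := by
    intro n
    simp only [u]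
    rw [hCrec _ (by omega)]
    push_cast
    ring_nf
  have hv : ∀ n, v (n + 2) = b (s + (n + 2 : ℕ) - 1) * v (n + 1) + a (s + (n + 2 : ℕ) - 1) * v n := by
    intro n
    simp only [v]
    rw [hBrec _ _ (by omega) (by omega)]
    push_cast
    ring_nf
  have hW0 : casoratian u v 0 = -C (s - 1) := by
    simp [casoratian, u, v, hBm1 s (by omega), hB0 s (by omega)]
  have hW := casoratian_eq (p := fun n => b (s + n - 1)) (q := fun n => a (s + n - 1)) hu hv nu
  have hprod : ∏ i ∈ range nu, a ((s + nu : ℕ) - i) = ∏ k ∈ range nu, a (s + (k + 2 : ℕ) - 1) := by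
    rw [← prod_range_reflect]
    refine prod_congr rfl fun i hi => congrArg a ?_
    have := mem_range.1 hi
    omega
  rw [hW0] at hW
  rw [hprod]
  simp only [casoratian, u, v] at hW
  push_cast at hW ⊢
  ring_nf at hW ⊢
  linear_combination hW

theorem docagne_identity_general
    (a b : ℤ → ℤ)
    (A B : ℤ → ℤ → ℤ)
    (hBm1 : ∀ l : ℤ, 0 ≤ l → B (-1) l = 0) (hB0 : ∀ l : ℤ, 0 ≤ l → B 0 l = 1)
    (hArec : ∀ l ν : ℤ, 0 ≤ l → 1 ≤ ν →
      A ν l = b (l + ν) * A (ν - 1) l + a (l + ν) * A (ν - 2) l)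
    (hBrec : ∀ l ν : ℤ, 0 ≤ l → 1 ≤ ν →
      B ν l = b (l + ν) * B (ν - 1) l + a (l + ν) * B (ν - 2) l) :
    ∀ lam nu : ℕ, nu ≤ lam →
      A (lam : ℤ) 0 * B ((nu : ℤ) - 1) ((lam : ℤ) - nu) =
        A ((lam : ℤ) - 1) 0 * B (nu : ℤ) ((lam : ℤ) - nu) +
          (-1 : ℤ) ^ (nu + 1) * (∏ i ∈ Finset.range nu, a ((lam : ℤ) - i)) *
            A ((lam : ℤ) - nu - 1) 0 ∧
      B (lam : ℤ) 0 * B ((nu : ℤ) - 1) ((lam : ℤ) - nu) =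
        B ((lam : ℤ) - 1) 0 * B (nu : ℤ) ((lam : ℤ) - nu) +
          (-1 : ℤ) ^ (nu + 1) * (∏ i ∈ Finset.range nu, a ((lam : ℤ) - i)) *
            B ((lam : ℤ) - nu - 1) 0 := by
  intro lam nu hle
  have hrec0 : ∀ C : ℤ → ℤ → ℤ, (∀ l ν : ℤ, 0 ≤ l → 1 ≤ ν →
      C ν l = b (l + ν) * C (ν - 1) l + a (l + ν) * C (ν - 2) l) →
      ∀ ν : ℤ, 1 ≤ ν → C ν 0 = b ν * C (ν - 1) 0 + a ν * C (ν - 2) 0 := fun C hC ν hν => by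
    simpa using hC 0 ν le_rfl hν
  exact ⟨docagne_of_recurrence a b _ B hBm1 hB0 hBrec (hrec0 A hArec) lam nu hle,
    docagne_of_recurrence a b _ B hBm1 hB0 hBrec (hrec0 B hBrec) lam nu hle⟩

/-- d'Ocagne's identity for generalized continuants. -/
theorem docagne_identity
    (a b : ℤ → ℤ)
    (ha : ∀ ν : ℤ, 1 ≤ ν → 0 < a ν) (hb : ∀ ν : ℤ, 0 ≤ ν → 0 < b ν)
    (A B : ℤ → ℤ → ℤ)
    (hAm1 : ∀ l : ℤ, 0 ≤ l → A (-1) l = 1) (hA0 : ∀ l : ℤ, 0 ≤ l → A 0 l = b l)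
    (hBm1 : ∀ l : ℤ, 0 ≤ l → B (-1) l = 0) (hB0 : ∀ l : ℤ, 0 ≤ l → B 0 l = 1)
    (hArec : ∀ l ν : ℤ, 0 ≤ l → 1 ≤ ν →
      A ν l = b (l + ν) * A (ν - 1) l + a (l + ν) * A (ν - 2) l)
    (hBrec : ∀ l ν : ℤ, 0 ≤ l → 1 ≤ ν →
      B ν l = b (l + ν) * B (ν - 1) l + a (l + ν) * B (ν - 2) l) :
    ∀ lam nu : ℕ, nu ≤ lam →
      A (lam : ℤ) 0 * B ((nu : ℤ) - 1) ((lam : ℤ) - nu) =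
        A ((lam : ℤ) - 1) 0 * B (nu : ℤ) ((lam : ℤ) - nu) +
          (-1 : ℤ) ^ (nu + 1) * (∏ i ∈ Finset.range nu, a ((lam : ℤ) - i)) *
            A ((lam : ℤ) - nu - 1) 0 ∧
      B (lam : ℤ) 0 * B ((nu : ℤ) - 1) ((lam : ℤ) - nu) =
        B ((lam : ℤ) - 1) 0 * B (nu : ℤ) ((lam : ℤ) - nu) +
          (-1 : ℤ) ^ (nu + 1) * (∏ i ∈ Finset.range nu, a ((lam : ℤ) - i)) *
            B ((lam : ℤ) - nu - 1) 0 :=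
  docagne_identity_general a b A B hBm1 hB0 hArec hBrec
end

section
/- (Binet's formula) For all integers n ≥ 1 and r ≥ −1, as real numbers, B_{nd+r} = (−D_d)^{n−1} · ( ((α^n − β^n)/(α − β))·B_{d+r} − ((α^{n−1} − β^{n−1})/(α − β))·B_r ). -/
/-!
Write `P k = M (k-1) ⋯ M 0` for the transfer matrices `M ν = !![b (ν+1), a (ν+1); 1, 0]`, so that
`P k` has first column `(B k, B (k-1))`. Periodicity gives `P (m + d) = P m * T` with `T = P d`,
and Cayley–Hamilton `T² = tr T • T - det T • 1` turns this into the three-term recurrence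
`B (m + 2d) = C_d B (m + d) + D_d B m`, where `det T = -D_d` and `tr T = C_d` (the latter read off
at `m = -1`, using `B (d-1) > 0`). Binet's formula for this constant-coefficient recurrence is then
the usual induction, the Lucas sequence `(αⁿ - βⁿ)/(α - β)` of the reciprocal roots satisfying the
dual recurrence `D U (n+2) + C U (n+1) = U n`.
-/

open Matrix Finset

section TransferProduct

/-- `transferProd M k = M (k - 1) * ⋯ * M 1 * M 0`. -/
def transferProd {α : Type*} [Monoid α] (M : ℕ → α) : ℕ → α
  | 0 => 1
  | k + 1 => M k * transferProd M k

theorem transferProd_add_of_periodic {α : Type*} [Monoid α] {M : ℕ → α} {d : ℕ}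
    (hM : ∀ n, M (n + d) = M n) (m : ℕ) :
    transferProd M (m + d) = transferProd M m * transferProd M d := by
  induction m with
  | zero => simp [transferProd]
  | succ m ih => rw [Nat.add_right_comm, transferProd, hM, ih, transferProd, mul_assoc]

theorem det_transferProd {R n : Type*} [CommRing R] [Fintype n] [DecidableEq n]
    (M : ℕ → Matrix n n R) (k : ℕ) :
    (transferProd M k).det = ∏ i ∈ range k, (M i).det := by
  induction k with
  | zero => simp [transferProd]
  | succ k ih => rw [transferProd, det_mul, ih, prod_range_succ, mul_comm]

theorem Matrix.mul_self_fin_two {R : Type*} [CommRing R] (A : Matrix (Fin 2) (Fin 2) R) :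
    A * A = A.trace • A - A.det • 1 := by
  rw [eta_fin_two A, mul_fin_two, trace_fin_two_of, det_fin_two_of]
  ext i j
  fin_cases i <;> fin_cases j <;> simp [one_fin_two] <;> ring

theorem transferProd_add_two_mul_of_periodic {R : Type*} [CommRing R]
    {M : ℕ → Matrix (Fin 2) (Fin 2) R} {d : ℕ} (hM : ∀ n, M (n + d) = M n) (m : ℕ) :
    transferProd M (m + 2 * d) =
      (transferProd M d).trace • transferProd M (m + d) -
        (transferProd M d).det • transferProd M m := by
  rw [two_mul, ← add_assoc, transferProd_add_of_periodic hM, transferProd_add_of_periodic hM,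
    mul_assoc, Matrix.mul_self_fin_two, mul_sub, mul_smul_comm, mul_smul_comm, mul_one]

end TransferProduct

section Continuant

variable {a b B : ℤ → ℤ}

def continuantMatrix (a b : ℤ → ℤ) (n : ℕ) : Matrix (Fin 2) (Fin 2) ℤ :=
  !![b (n + 1), a (n + 1); 1, 0]

theorem transferProd_continuantMatrix (hBm1 : B (-1) = 0) (hB0 : B 0 = 1)
    (hBrec : ∀ ν : ℤ, 1 ≤ ν → B ν = b ν * B (ν - 1) + a ν * B (ν - 2)) (m : ℕ) :
    transferProd (continuantMatrix a b) m 0 0 = B m ∧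
      transferProd (continuantMatrix a b) m 1 0 = B (m - 1) := by
  induction m with
  | zero => simp [transferProd, hB0, hBm1]
  | succ m ih =>
    simp only [transferProd, continuantMatrix, mul_apply, Fin.sum_univ_two, ih]
    refine ⟨?_, by simp⟩
    rw [Nat.cast_succ, hBrec (m + 1) (by omega), show (m : ℤ) + 1 - 2 = m - 1 by ring]
    simp

theorem continuant_pos (ha : ∀ ν : ℤ, 1 ≤ ν → 0 < a ν) (hb : ∀ ν : ℤ, 1 ≤ ν → 0 < b ν)
    (hBm1 : B (-1) = 0) (hB0 : B 0 = 1)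
    (hBrec : ∀ ν : ℤ, 1 ≤ ν → B ν = b ν * B (ν - 1) + a ν * B (ν - 2)) (n : ℕ) :
    0 < B n := by
  suffices ∀ n : ℕ, 0 ≤ B ((n : ℤ) - 1) ∧ 0 < B n from (this n).2
  intro n
  induction n with
  | zero => simp [hB0, hBm1]
  | succ n ih =>
    have hrec := hBrec (n + 1) (by omega)
    simp only [add_sub_cancel_right, show (n : ℤ) + 1 - 2 = n - 1 by ring] at hrec
    push_cast
    refine ⟨by simpa using ih.2.le, ?_⟩
    rw [hrec]
    nlinarith [ha (n + 1) (by omega), hb (n + 1) (by omega)]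

theorem continuantMatrix_add_of_periodic {d : ℕ}
    (hpa : ∀ ν : ℤ, 1 ≤ ν → a (ν + d) = a ν) (hpb : ∀ ν : ℤ, 1 ≤ ν → b (ν + d) = b ν) (n : ℕ) :
    continuantMatrix a b (n + d) = continuantMatrix a b n := by
  simp only [continuantMatrix, Nat.cast_add, add_right_comm _ (d : ℤ)]
  rw [hpa _ (by omega), hpb _ (by omega)]

theorem det_transferProd_continuantMatrix (k : ℕ) :
    (transferProd (continuantMatrix a b) k).det = (-1) ^ k * ∏ i ∈ range k, a (i + 1) := by
  simp [det_transferProd, continuantMatrix, prod_neg]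

theorem continuant_add_two_mul_sub_one {d : ℕ}
    (hpa : ∀ ν : ℤ, 1 ≤ ν → a (ν + d) = a ν) (hpb : ∀ ν : ℤ, 1 ≤ ν → b (ν + d) = b ν)
    (hBm1 : B (-1) = 0) (hB0 : B 0 = 1)
    (hBrec : ∀ ν : ℤ, 1 ≤ ν → B ν = b ν * B (ν - 1) + a ν * B (ν - 2)) (m : ℕ) :
    B (m + 2 * d - 1) = (transferProd (continuantMatrix a b) d).trace * B (m + d - 1) -
      (transferProd (continuantMatrix a b) d).det * B (m - 1) := by
  -- entry `(1, 0)` rather than `(0, 0)`, so that `m = 0` already covers index `-1`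
  have h := congrFun (congrFun (transferProd_add_two_mul_of_periodic
    (continuantMatrix_add_of_periodic hpa hpb) m) 1) 0
  simp only [Matrix.sub_apply, Matrix.smul_apply, smul_eq_mul,
    (transferProd_continuantMatrix hBm1 hB0 hBrec _).2] at h
  exact_mod_cast h

theorem continuant_add_two_mul {d : ℕ} (hd : 1 ≤ d)
    (ha : ∀ ν : ℤ, 1 ≤ ν → 0 < a ν) (hb : ∀ ν : ℤ, 1 ≤ ν → 0 < b ν)
    (hpa : ∀ ν : ℤ, 1 ≤ ν → a (ν + d) = a ν) (hpb : ∀ ν : ℤ, 1 ≤ ν → b (ν + d) = b ν)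
    (hBm1 : B (-1) = 0) (hB0 : B 0 = 1)
    (hBrec : ∀ ν : ℤ, 1 ≤ ν → B ν = b ν * B (ν - 1) + a ν * B (ν - 2)) {Cd Dd : ℤ}
    (hC : B ((d : ℤ) - 1) * Cd = B (2 * (d : ℤ) - 1))
    (hD : Dd = (-1 : ℤ) ^ (d - 1) * ∏ i ∈ range d, a ((i : ℤ) + 1)) {m : ℤ} (hm : -1 ≤ m) :
    B (m + 2 * d) = Cd * B (m + d) + Dd * B m := by
  set T := transferProd (continuantMatrix a b) d
  have hrec := continuant_add_two_mul_sub_one hpa hpb hBm1 hB0 hBrec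
  have hdet : -T.det = Dd := by
    obtain ⟨e, rfl⟩ : ∃ e, d = e + 1 := ⟨d - 1, by omega⟩
    rw [hD, det_transferProd_continuantMatrix, pow_succ]
    simp
  have htr : T.trace = Cd := by
    have h0 := hrec 0
    simp only [CharP.cast_eq_zero, zero_add, zero_sub, hBm1, mul_zero, sub_zero] at h0
    have hpos := continuant_pos ha hb hBm1 hB0 hBrec (d - 1)
    rw [Nat.cast_sub hd, Nat.cast_one] at hpos
    exact mul_left_cancel₀ hpos.ne' (by linarith)
  obtain ⟨k, rfl⟩ : ∃ k : ℕ, m = k - 1 := ⟨(m + 1).toNat, by omega⟩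
  rw [show (k : ℤ) - 1 + 2 * d = k + 2 * d - 1 by ring, show (k : ℤ) - 1 + d = k + d - 1 by ring,
    hrec k, ← htr, ← hdet]
  ring

end Continuant

section Binet

theorem eq_lucas_combination_of_recurrence {R : Type*} [CommRing R] {C D : R} {U u : ℕ → R}
    (hU0 : U 0 = 0) (hU1 : U 1 = 1) (hU : ∀ n, D * U (n + 2) + C * U (n + 1) = U n)
    (hu : ∀ n, u (n + 2) = C * u (n + 1) + D * u n) (n : ℕ) :
    u (n + 1) = (-D) ^ n * (U (n + 1) * u 1 - U n * u 0) := by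
  induction n using Nat.twoStepInduction with
  | zero => simp [hU0, hU1]
  | one => linear_combination hu 0 + u 1 * hU 0 + (-D * u 0 - C * u 1) * hU1 + u 1 * hU0
  | more n ih₁ ih₂ =>
    linear_combination hu (n + 1) + C * ih₂ + D * ih₁ - (-D) ^ n * D * u 1 * hU (n + 1) +
      (-D) ^ n * D * u 0 * hU n

theorem lucas_recurrence {K : Type*} [Field K] {C D α β : K} (hα : D * α ^ 2 + C * α = 1)
    (hβ : D * β ^ 2 + C * β = 1) (n : ℕ) :
    D * ((α ^ (n + 2) - β ^ (n + 2)) / (α - β)) + C * ((α ^ (n + 1) - β ^ (n + 1)) / (α - β)) =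
      (α ^ n - β ^ n) / (α - β) := by
  have h : D * (α ^ (n + 2) - β ^ (n + 2)) + C * (α ^ (n + 1) - β ^ (n + 1)) = α ^ n - β ^ n := by
    linear_combination α ^ n * hα - β ^ n * hβ
  rw [← h]
  ring

theorem binet_of_recurrence {K : Type*} [Field K] {C D α β : K} (hα : D * α ^ 2 + C * α = 1)
    (hβ : D * β ^ 2 + C * β = 1) (hαβ : α ≠ β) {u : ℕ → K}
    (hu : ∀ n, u (n + 2) = C * u (n + 1) + D * u n) (n : ℕ) :
    u (n + 1) = (-D) ^ n *
      ((α ^ (n + 1) - β ^ (n + 1)) / (α - β) * u 1 - (α ^ n - β ^ n) / (α - β) * u 0) :=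
  eq_lucas_combination_of_recurrence (U := fun n ↦ (α ^ n - β ^ n) / (α - β)) (by simp)
    (by simp [sub_ne_zero.mpr hαβ]) (lucas_recurrence hα hβ) hu n

end Binet

/-- Binet's formula for the periodic continuant denominators. -/
theorem binet_formula
    (d : ℕ) (hd : 1 ≤ d) (a b : ℤ → ℤ)
    (ha : ∀ ν : ℤ, 1 ≤ ν → 0 < a ν) (hb : ∀ ν : ℤ, 1 ≤ ν → 0 < b ν)
    (hpa : ∀ ν : ℤ, 1 ≤ ν → a (ν + d) = a ν) (hpb : ∀ ν : ℤ, 1 ≤ ν → b (ν + d) = b ν)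
    (B : ℤ → ℤ) (hBm1 : B (-1) = 0) (hB0 : B 0 = 1)
    (hBrec : ∀ ν : ℤ, 1 ≤ ν → B ν = b ν * B (ν - 1) + a ν * B (ν - 2))
    (Cd Dd Δ : ℤ)
    (hC : B ((d : ℤ) - 1) * Cd = B (2 * (d : ℤ) - 1))
    (hD : Dd = (-1 : ℤ) ^ (d - 1) * ∏ i ∈ Finset.range d, a ((i : ℤ) + 1))
    (hΔ : Δ = Cd ^ 2 + 4 * Dd) (hΔpos : 0 < Δ)
    (α β : ℝ)
    (hα : α = (-(Cd : ℝ) + Real.sqrt (Δ : ℝ)) / (2 * (Dd : ℝ)))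
    (hβ : β = (-(Cd : ℝ) - Real.sqrt (Δ : ℝ)) / (2 * (Dd : ℝ))) :
    ∀ n : ℕ, 1 ≤ n → ∀ r : ℤ, -1 ≤ r →
      (B ((n : ℤ) * d + r) : ℝ) =
        (-(Dd : ℝ)) ^ (n - 1) *
          ((α ^ n - β ^ n) / (α - β) * (B ((d : ℤ) + r) : ℝ) -
            (α ^ (n - 1) - β ^ (n - 1)) / (α - β) * (B r : ℝ)) := by
  have hDd : (Dd : ℝ) ≠ 0 := by
    rw [hD]
    exact_mod_cast mul_ne_zero (pow_ne_zero _ (by norm_num))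
      (prod_pos fun i _ ↦ ha _ (by omega)).ne'
  have hsqrt : 0 < Real.sqrt Δ := Real.sqrt_pos.mpr (by exact_mod_cast hΔpos)
  have hdisc : discrim (Dd : ℝ) Cd (-1) = Real.sqrt Δ * Real.sqrt Δ := by
    rw [Real.mul_self_sqrt (by positivity), discrim, hΔ]
    push_cast
    ring
  have hroot : ∀ z : ℝ, z = α ∨ z = β → (Dd : ℝ) * z ^ 2 + Cd * z = 1 := fun z hz ↦ by
    linear_combination (quadratic_eq_zero_iff hDd hdisc z).mpr (by rwa [← hα, ← hβ])
  have hαβ : α ≠ β := by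
    rw [hα, hβ, Ne, div_left_inj' (by simpa using hDd)]
    linarith
  intro n hn r hr
  obtain ⟨k, rfl⟩ := Nat.exists_eq_add_of_le' hn
  have hrec (k : ℕ) : (B ((k + 2 : ℕ) * d + r) : ℝ) =
      Cd * (B ((k + 1 : ℕ) * d + r)) + Dd * (B (k * d + r)) := by
    have hk := continuant_add_two_mul hd ha hb hpa hpb hBm1 hB0 hBrec hC hD
      (m := k * d + r) (by nlinarith)
    rw [show (k : ℤ) * d + r + 2 * d = (k + 2 : ℕ) * d + r by push_cast; ring,
      show (k : ℤ) * d + r + d = (k + 1 : ℕ) * d + r by push_cast; ring] at hk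
    exact_mod_cast hk
  simpa using binet_of_recurrence (hroot α (.inl rfl)) (hroot β (.inr rfl)) hαβ
    (u := fun k : ℕ ↦ (B (k * d + r) : ℝ)) hrec k
end

section
/- Suppose d = 2. Then the series of real numbers ∑_{n=1}^∞ (a_1·a_2)^{2^{n−1}} / B_{2^{n+1}−1} converges, and its sum equals 1/(b_1·β). -/
/-! For `d = 2` the odd-indexed continuants `u m = B (2m - 1)` satisfy the Lucas recurrence
`u (m + 2) = C u (m + 1) - P u m` with `C = b₁b₂ + a₁ + a₂ = C₂` and `P = a₁a₂ = -D₂`, so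
`u m = b₁ (φ^m - ψ^m) / (φ - ψ)` where `φ > ψ > 0` are the roots of `z² - Cz + P`; moreover
`β = 1/ψ`. With `r = ψ/φ` the `n`-th term is `(φ - ψ)/b₁ · r^N / (1 - r^(2N))` for `N = 2^n`, and
`x/(1 - x²) = x/(1 - x) - x²/(1 - x²)` makes the series telescope to
`(φ - ψ)/b₁ · r/(1 - r) = ψ/b₁`. -/

open Filter Topology

theorem hasSum_sub_succ_of_antitone {f : ℕ → ℝ} {l : ℝ} (hf : Antitone f)
    (hl : Tendsto f atTop (𝓝 l)) : HasSum (fun n ↦ f n - f (n + 1)) (f 0 - l) := by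
  rw [hasSum_iff_tendsto_nat_of_nonneg (fun n ↦ sub_nonneg.2 (hf n.le_succ))]
  simp_rw [Finset.sum_range_sub']
  exact tendsto_const_nhds.sub hl

theorem div_one_sub_sub_div_one_sub_sq (x : ℝ) (h : x ^ 2 ≠ 1) :
    x / (1 - x) - x ^ 2 / (1 - x ^ 2) = x / (1 - x ^ 2) := by
  have h1 : 1 - x ≠ 0 := by rintro h'; apply h; rw [show x = 1 by linarith]; norm_num
  have h2 : 1 - x ^ 2 ≠ 0 := sub_ne_zero.2 (Ne.symm h)
  field_simp
  ring

theorem hasSum_pow_two_pow_div_one_sub {r : ℝ} (h0 : 0 ≤ r) (h1 : r < 1) :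
    HasSum (fun n : ℕ ↦ r ^ 2 ^ n / (1 - r ^ 2 ^ (n + 1))) (r / (1 - r)) := by
  set f : ℕ → ℝ := fun n ↦ r ^ 2 ^ n / (1 - r ^ 2 ^ n)
  have hlt : ∀ n : ℕ, r ^ 2 ^ n < 1 := fun n ↦ pow_lt_one₀ h0 h1 (by positivity)
  have hterm : ∀ n, f n - f (n + 1) = r ^ 2 ^ n / (1 - r ^ 2 ^ (n + 1)) := by
    intro n
    have h := (hlt (n + 1)).ne
    simp only [f, pow_succ 2 n, pow_mul] at h ⊢
    exact div_one_sub_sub_div_one_sub_sq _ h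
  have hanti : Antitone f := antitone_nat_of_succ_le fun n ↦ by
    have := hlt (n + 1)
    rw [← sub_nonneg, hterm]
    exact div_nonneg (by positivity) (by linarith)
  have hlim : Tendsto f atTop (𝓝 0) := by
    have hpow : Tendsto (fun n : ℕ ↦ r ^ 2 ^ n) atTop (𝓝 0) :=
      (tendsto_pow_atTop_nhds_zero_of_lt_one h0 h1).comp
        (tendsto_pow_atTop_atTop_of_one_lt (r := 2) one_lt_two)
    have := hpow.div (tendsto_const_nhds.sub hpow) (by norm_num : (1 : ℝ) - 0 ≠ 0)
    rwa [sub_zero, zero_div] at this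
  simpa [hterm, f] using hasSum_sub_succ_of_antitone hanti hlim

theorem hasSum_mul_pow_two_pow_div_sub {φ ψ : ℝ} (hψ : 0 < ψ) (hψφ : ψ < φ) :
    HasSum (fun n : ℕ ↦ (φ * ψ) ^ 2 ^ n / (φ ^ 2 ^ (n + 1) - ψ ^ 2 ^ (n + 1))) (ψ / (φ - ψ)) := by
  have hφ : 0 < φ := hψ.trans hψφ
  convert hasSum_pow_two_pow_div_one_sub (r := ψ / φ) (by positivity) ((div_lt_one hφ).2 hψφ)
    using 1
  · funext n
    have : ψ ^ 2 ^ (n + 1) < φ ^ 2 ^ (n + 1) := pow_lt_pow_left₀ hψφ hψ.le (by positivity)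
    rw [div_pow, div_pow, pow_succ 2 n, pow_mul, pow_mul, mul_pow]
    rw [pow_succ 2 n, pow_mul, pow_mul] at this
    field_simp
  · field_simp

theorem binet_of_linear_rec {K : Type*} [CommRing K] {u : ℕ → K} {φ ψ : K} (h0 : u 0 = 0)
    (hrec : ∀ n, u (n + 2) = (φ + ψ) * u (n + 1) - φ * ψ * u n) (n : ℕ) :
    u n * (φ - ψ) = u 1 * (φ ^ n - ψ ^ n) := by
  induction n using Nat.twoStepInduction with
  | zero => simp [h0]
  | one => ring
  | more n ih₀ ih₁ =>
    rw [hrec]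
    linear_combination (φ + ψ) * ih₁ - φ * ψ * ih₀

theorem apply_add_mul_of_periodic {α : Type*} {f : ℤ → α} {p : ℤ} (hp : 0 ≤ p)
    (h : ∀ ν, 1 ≤ ν → f (ν + p) = f ν) {ν : ℤ} (hν : 1 ≤ ν) (k : ℕ) : f (ν + p * k) = f ν := by
  induction k with
  | zero => simp
  | succ k ih =>
    have hk : 1 ≤ ν + p * k := le_add_of_le_of_nonneg hν (by positivity)
    rw [← ih, ← h _ hk]
    push_cast; ring_nf

theorem continuant_one {a b B : ℤ → ℤ} (hBm1 : B (-1) = 0) (hB0 : B 0 = 1)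
    (hBrec : ∀ ν, 1 ≤ ν → B ν = b ν * B (ν - 1) + a ν * B (ν - 2)) : B 1 = b 1 := by
  simpa [hB0, hBm1] using hBrec 1 le_rfl

theorem continuant_odd_rec {a b B : ℤ → ℤ} (hpa : ∀ ν, 1 ≤ ν → a (ν + 2) = a ν)
    (hpb : ∀ ν, 1 ≤ ν → b (ν + 2) = b ν)
    (hBrec : ∀ ν, 1 ≤ ν → B ν = b ν * B (ν - 1) + a ν * B (ν - 2)) (m : ℕ) :
    B (2 * m + 3) = (b 1 * b 2 + a 1 + a 2) * B (2 * m + 1) - a 1 * a 2 * B (2 * m - 1) := by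
  have ha₁ := apply_add_mul_of_periodic zero_le_two hpa le_rfl (m + 1)
  have hb₁ := apply_add_mul_of_periodic zero_le_two hpb le_rfl (m + 1)
  have ha₂ := apply_add_mul_of_periodic zero_le_two hpa one_le_two m
  have hb₂ := apply_add_mul_of_periodic zero_le_two hpb one_le_two m
  have ha₃ := apply_add_mul_of_periodic zero_le_two hpa le_rfl m
  have hb₃ := apply_add_mul_of_periodic zero_le_two hpb le_rfl m
  have h₃ := hBrec (2 * m + 3) (by omega)
  have h₂ := hBrec (2 * m + 2) (by omega)
  have h₁ := hBrec (2 * m + 1) (by omega)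
  push_cast at ha₁ hb₁
  -- normalising all indices lets the periodicity facts rewrite the recurrences
  ring_nf at ha₁ hb₁ ha₂ hb₂ ha₃ hb₃ h₃ h₂ h₁ ⊢
  rw [ha₁, hb₁] at h₃
  rw [ha₂, hb₂] at h₂
  rw [ha₃, hb₃] at h₁
  linear_combination h₃ + b 1 * h₂ - a 2 * h₁

theorem continuant_odd_binet {a b B : ℤ → ℤ} (hpa : ∀ ν, 1 ≤ ν → a (ν + 2) = a ν)
    (hpb : ∀ ν, 1 ≤ ν → b (ν + 2) = b ν) (hBm1 : B (-1) = 0) (hB0 : B 0 = 1)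
    (hBrec : ∀ ν, 1 ≤ ν → B ν = b ν * B (ν - 1) + a ν * B (ν - 2)) {φ ψ : ℝ}
    (hsum : φ + ψ = ((b 1 * b 2 + a 1 + a 2 : ℤ) : ℝ)) (hprod : φ * ψ = ((a 1 * a 2 : ℤ) : ℝ))
    (m : ℕ) : (B (2 * m - 1) : ℝ) * (φ - ψ) = b 1 * (φ ^ m - ψ ^ m) := by
  have := binet_of_linear_rec (u := fun m : ℕ ↦ (B (2 * m - 1) : ℝ)) (φ := φ) (ψ := ψ)
    (by simp [hBm1]) (fun n ↦ ?_) m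
  · simpa [continuant_one hBm1 hB0 hBrec] using this
  rw [hsum, hprod]
  have h := continuant_odd_rec hpa hpb hBrec n
  push_cast
  ring_nf at h ⊢
  exact_mod_cast h

theorem hasSum_continuant_millin {a b B : ℤ → ℤ} (hpa : ∀ ν, 1 ≤ ν → a (ν + 2) = a ν)
    (hpb : ∀ ν, 1 ≤ ν → b (ν + 2) = b ν) (hBm1 : B (-1) = 0) (hB0 : B 0 = 1)
    (hBrec : ∀ ν, 1 ≤ ν → B ν = b ν * B (ν - 1) + a ν * B (ν - 2)) (hb : b 1 ≠ 0) {φ ψ : ℝ}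
    (hψ : 0 < ψ) (hψφ : ψ < φ)
    (hsum : φ + ψ = ((b 1 * b 2 + a 1 + a 2 : ℤ) : ℝ)) (hprod : φ * ψ = ((a 1 * a 2 : ℤ) : ℝ)) :
    HasSum (fun n : ℕ ↦ ((a 1 * a 2 : ℤ) : ℝ) ^ 2 ^ n / (B (2 ^ (n + 2) - 1) : ℝ))
      (ψ / b 1) := by
  have hb' : (b 1 : ℝ) ≠ 0 := by exact_mod_cast hb
  have hφψ : φ - ψ ≠ 0 := (sub_pos.2 hψφ).ne'
  have hvalue : ψ / b 1 = (φ - ψ) / b 1 * (ψ / (φ - ψ)) := by field_simp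
  rw [hvalue]
  refine ((hasSum_mul_pow_two_pow_div_sub hψ hψφ).mul_left _).congr_fun fun n ↦ ?_
  have hD : φ ^ 2 ^ (n + 1) - ψ ^ 2 ^ (n + 1) ≠ 0 :=
    (sub_pos.2 (pow_lt_pow_left₀ hψφ hψ.le (by positivity))).ne'
  have hB := continuant_odd_binet hpa hpb hBm1 hB0 hBrec hsum hprod (2 ^ (n + 1))
  rw [show 2 * ((2 ^ (n + 1) : ℕ) : ℤ) = 2 ^ (n + 2) by push_cast; ring, ← eq_div_iff hφψ] at hB
  rw [← hprod, hB]
  field_simp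

theorem millin_series_general
    (d : ℕ) (a b : ℤ → ℤ)
    (ha : ∀ ν : ℤ, 1 ≤ ν → 0 < a ν) (hb : ∀ ν : ℤ, 1 ≤ ν → 0 < b ν)
    (hpa : ∀ ν : ℤ, 1 ≤ ν → a (ν + d) = a ν) (hpb : ∀ ν : ℤ, 1 ≤ ν → b (ν + d) = b ν)
    (B : ℤ → ℤ) (hBm1 : B (-1) = 0) (hB0 : B 0 = 1)
    (hBrec : ∀ ν : ℤ, 1 ≤ ν → B ν = b ν * B (ν - 1) + a ν * B (ν - 2))
    (Cd Dd Δ : ℤ)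
    (hC : B ((d : ℤ) - 1) * Cd = B (2 * (d : ℤ) - 1))
    (hD : Dd = (-1 : ℤ) ^ (d - 1) * ∏ i ∈ Finset.range d, a ((i : ℤ) + 1))
    (hΔ : Δ = Cd ^ 2 + 4 * Dd) (hΔpos : 0 < Δ)
    (β : ℝ)
    (hβ : β = (-(Cd : ℝ) - Real.sqrt (Δ : ℝ)) / (2 * (Dd : ℝ)))
    (hd2 : d = 2) :
    HasSum
      (fun n : ℕ =>
        ((a 1 * a 2 : ℤ) : ℝ) ^ (2 ^ n) / (B ((2 : ℤ) ^ (n + 2) - 1) : ℝ))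
      (1 / ((b 1 : ℝ) * β)) := by
  subst hd2
  simp only [Nat.cast_ofNat] at hpa hpb hC
  have hb₁ := hb 1 le_rfl
  have hCd : Cd = b 1 * b 2 + a 1 + a 2 := by
    have hB3 := continuant_odd_rec hpa hpb hBrec 0
    norm_num [continuant_one hBm1 hB0 hBrec, hBm1] at hB3 hC
    exact mul_left_cancel₀ hb₁.ne' (hC.trans (hB3.trans (mul_comm _ _)))
  have hDd : Dd = -(a 1 * a 2) := by simp [hD, Finset.prod_range_succ]
  have hCpos : (0 : ℝ) < Cd := by
    have := mul_pos hb₁ (hb 2 one_le_two)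
    exact_mod_cast (by linarith [ha 1 le_rfl, ha 2 one_le_two] : 0 < Cd)
  have hPpos : (0 : ℝ) < (a 1 * a 2 : ℤ) := by
    exact_mod_cast mul_pos (ha 1 le_rfl) (ha 2 one_le_two)
  set s := √(Δ : ℝ)
  have hs : 0 < s := Real.sqrt_pos.2 (by exact_mod_cast hΔpos)
  have hs2 : s ^ 2 = (Cd : ℝ) ^ 2 - 4 * ((a 1 * a 2 : ℤ) : ℝ) := by
    rw [Real.sq_sqrt (by exact_mod_cast hΔpos.le), hΔ, hDd]; push_cast; ring
  have hψ : 0 < (Cd - s) / 2 := by nlinarith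
  have hβψ : 1 / ((b 1 : ℝ) * β) = (Cd - s) / 2 / b 1 := by
    have hne : -(Cd : ℝ) - s ≠ 0 := by linarith
    rw [hβ, hDd]
    field_simp
    push_cast at hs2 ⊢
    linear_combination -hs2
  rw [hβψ]
  refine hasSum_continuant_millin hpa hpb hBm1 hB0 hBrec hb₁.ne' (φ := (Cd + s) / 2) hψ
    (by linarith) (by rw [← hCd]; ring) (by linear_combination -hs2 / 4)

/-- A Millin-type series for the bi-periodic (d = 2) continuant denominators:
`∑_{n≥1} (a₁a₂)^(2^(n-1)) / B_{2^(n+1)-1} = 1/(b₁·β)` (the series is indexed here by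
`n : ℕ` via the shift `n ↦ n + 1`). -/
theorem millin_series
    (d : ℕ) (hd : 1 ≤ d) (a b : ℤ → ℤ)
    (ha : ∀ ν : ℤ, 1 ≤ ν → 0 < a ν) (hb : ∀ ν : ℤ, 1 ≤ ν → 0 < b ν)
    (hpa : ∀ ν : ℤ, 1 ≤ ν → a (ν + d) = a ν) (hpb : ∀ ν : ℤ, 1 ≤ ν → b (ν + d) = b ν)
    (B : ℤ → ℤ) (hBm1 : B (-1) = 0) (hB0 : B 0 = 1)
    (hBrec : ∀ ν : ℤ, 1 ≤ ν → B ν = b ν * B (ν - 1) + a ν * B (ν - 2))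
    (Cd Dd Δ : ℤ)
    (hC : B ((d : ℤ) - 1) * Cd = B (2 * (d : ℤ) - 1))
    (hD : Dd = (-1 : ℤ) ^ (d - 1) * ∏ i ∈ Finset.range d, a ((i : ℤ) + 1))
    (hΔ : Δ = Cd ^ 2 + 4 * Dd) (hΔpos : 0 < Δ)
    (α β : ℝ)
    (hα : α = (-(Cd : ℝ) + Real.sqrt (Δ : ℝ)) / (2 * (Dd : ℝ)))
    (hβ : β = (-(Cd : ℝ) - Real.sqrt (Δ : ℝ)) / (2 * (Dd : ℝ)))
    (hd2 : d = 2) :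
    HasSum
      (fun n : ℕ =>
        ((a 1 * a 2 : ℤ) : ℝ) ^ (2 ^ n) / (B ((2 : ℤ) ^ (n + 2) - 1) : ℝ))
      (1 / ((b 1 : ℝ) * β)) :=
  millin_series_general d a b ha hb hpa hpb B hBm1 hB0 hBrec Cd Dd Δ hC hD hΔ hΔpos β hβ hd2
end

section
/- The series of real numbers ∑_{n=1}^∞ (−D_d)^{n−1} / (B_{nd−1}·B_{(n+1)d−1}) converges, and its sum equals α / B_{d−1}². -/
/-!
Put `u n = B_{nd-1}`. By periodicity, one period maps the two fundamental solutions of the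
recurrence linearly by a fixed `2 × 2` matrix whose determinant is the Casoratian `-D_d` and whose
trace is `C_d` (because `B_{2d-1} = trace · B_{d-1}`); by Cayley–Hamilton,
`u (n+2) = C_d u (n+1) + D_d u n` with `u 0 = 0`. Cassini's identity
`u (n+2) u n - u (n+1)² = -(-D_d)ⁿ u 1²` turns the `n`-th term into
`(u (n+1) / u (n+2) - u n / u (n+1)) / u 1²`. The characteristic roots are `1/α > |1/β|`, so by
Binet's formula `u n / u (n+1) → α` and the terms decay like `|α/β|ⁿ`: the series converges
absolutely and telescopes to `α / u 1²`.
-/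

open Filter Topology Finset

section ThreeTermRecurrence

variable {R : Type*} [CommRing R] (a b : ℕ → R)

-- `threeTermSol a b 0 1 n` is the paper's `B_{n-1}` once the coefficients are shifted by one.
def threeTermSol (x₀ x₁ : R) : ℕ → R
  | 0 => x₀
  | 1 => x₁
  | n + 2 => b n * threeTermSol x₀ x₁ (n + 1) + a n * threeTermSol x₀ x₁ n

variable {a b}

theorem eq_threeTermSol {x : ℕ → R} (hx : ∀ n, x (n + 2) = b n * x (n + 1) + a n * x n)
    (n : ℕ) : x n = threeTermSol a b (x 0) (x 1) n := by
  induction n using Nat.twoStepInduction with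
  | zero => rfl
  | one => rfl
  | more n h₀ h₁ => rw [hx, h₀, h₁, threeTermSol]

theorem threeTermSol_eq_add (x₀ x₁ : R) (n : ℕ) :
    threeTermSol a b x₀ x₁ n = x₀ * threeTermSol a b 1 0 n + x₁ * threeTermSol a b 0 1 n := by
  induction n using Nat.twoStepInduction with
  | zero => simp [threeTermSol]
  | one => simp [threeTermSol]
  | more n h₀ h₁ => simp only [threeTermSol, h₀, h₁]; ring

theorem threeTermSol_casoratian (n : ℕ) :
    threeTermSol a b 0 1 (n + 1) * threeTermSol a b 1 0 n
      - threeTermSol a b 0 1 n * threeTermSol a b 1 0 (n + 1) = (-1) ^ n * ∏ i ∈ range n, a i := by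
  induction n with
  | zero => simp [threeTermSol]
  | succ n ih =>
    rw [prod_range_succ, pow_succ, threeTermSol, threeTermSol]
    linear_combination (-a n) * ih

theorem add_period_eq_of_rec {d : ℕ} (ha : ∀ n, a (n + d) = a n) (hb : ∀ n, b (n + d) = b n)
    {x : ℕ → R} (hx : ∀ n, x (n + 2) = b n * x (n + 1) + a n * x n) (n : ℕ) :
    x (n + d) = x d * threeTermSol a b 1 0 n + x (d + 1) * threeTermSol a b 0 1 n := by
  have hshift : ∀ n, x (n + 2 + d) = b n * x (n + 1 + d) + a n * x (n + d) := fun n => by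
    rw [show n + 2 + d = n + d + 2 by ring, hx, ha, hb, add_right_comm]
  rw [eq_threeTermSol (x := fun n => x (n + d)) hshift, threeTermSol_eq_add, zero_add, add_comm 1 d]

theorem threeTermSol_mul_period {d : ℕ} (ha : ∀ n, a (n + d) = a n)
    (hb : ∀ n, b (n + d) = b n) (n : ℕ) :
    threeTermSol a b 0 1 ((n + 2) * d) =
      (threeTermSol a b 0 1 (d + 1) + threeTermSol a b 1 0 d) * threeTermSol a b 0 1 ((n + 1) * d)
        - (-1) ^ d * (∏ i ∈ range d, a i) * threeTermSol a b 0 1 (n * d) := by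
  have hP := add_period_eq_of_rec ha hb (x := threeTermSol a b 0 1) fun _ => rfl
  have hQ := add_period_eq_of_rec ha hb (x := threeTermSol a b 1 0) fun _ => rfl
  rw [show (n + 2) * d = (n + 1) * d + d by ring, show (n + 1) * d = n * d + d by ring, hP, hP,
    hQ, ← threeTermSol_casoratian]
  ring

theorem threeTermSol_mul_period_of_mul_eq [IsDomain R] {d : ℕ} (hd : d ≠ 0)
    (ha : ∀ n, a (n + d) = a n) (hb : ∀ n, b (n + d) = b n) {C : R}
    (hPd : threeTermSol a b 0 1 d ≠ 0)
    (hC : threeTermSol a b 0 1 d * C = threeTermSol a b 0 1 (2 * d)) (n : ℕ) :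
    threeTermSol a b 0 1 ((n + 2) * d) =
      C * threeTermSol a b 0 1 ((n + 1) * d)
        + (-1) ^ (d - 1) * (∏ i ∈ range d, a i) * threeTermSol a b 0 1 (n * d) := by
  have htrace : C = threeTermSol a b 0 1 (d + 1) + threeTermSol a b 1 0 d := by
    refine mul_left_cancel₀ hPd ?_
    rw [hC, threeTermSol_mul_period ha hb 0]
    simp [threeTermSol, mul_comm]
  obtain ⟨k, rfl⟩ := Nat.exists_eq_succ_of_ne_zero hd
  rw [threeTermSol_mul_period ha hb, htrace, Nat.succ_sub_one, pow_succ]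
  ring

end ThreeTermRecurrence

theorem threeTermSol_zero_one_succ_pos {R : Type*} [CommRing R] [PartialOrder R]
    [IsStrictOrderedRing R] {a b : ℕ → R} (ha : ∀ n, 0 ≤ a n) (hb : ∀ n, 0 < b n) (n : ℕ) :
    0 < threeTermSol a b 0 1 (n + 1) := by
  induction n using Nat.twoStepInduction with
  | zero => exact zero_lt_one
  | one => simpa [threeTermSol] using hb 0
  | more n h₀ h₁ => exact add_pos_of_pos_of_nonneg (mul_pos (hb _) h₁) (mul_nonneg (ha _) h₀.le)

theorem eq_threeTermSol_of_int_rec {R : Type*} [CommRing R] {a b B : ℤ → R} (hBm1 : B (-1) = 0)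
    (hB0 : B 0 = 1) (hBrec : ∀ ν : ℤ, 1 ≤ ν → B ν = b ν * B (ν - 1) + a ν * B (ν - 2)) (n : ℕ) :
    B (n - 1) = threeTermSol (fun n => a (n + 1)) (fun n => b (n + 1)) 0 1 n := by
  have hrec : ∀ n : ℕ, B ((n + 2 : ℕ) - 1) =
      b (n + 1) * B ((n + 1 : ℕ) - 1) + a (n + 1) * B ((n : ℕ) - 1) := fun n => by
    have h := hBrec (n + 1) (by omega)
    rw [show (n : ℤ) + 1 - 1 = ((n + 1 : ℕ) : ℤ) - 1 by push_cast; ring,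
      show (n : ℤ) + 1 - 2 = (n : ℤ) - 1 by ring] at h
    rw [show ((n + 2 : ℕ) : ℤ) - 1 = n + 1 by push_cast; ring, h]
  convert eq_threeTermSol (x := fun n : ℕ => B (n - 1)) hrec n <;> simp [hBm1, hB0]

section CharacteristicRoots

variable {R : Type*} [CommRing R] {u : ℕ → R} {r s : R}

theorem binet_of_rec (hu : ∀ n, u (n + 2) = (r + s) * u (n + 1) - r * s * u n) (hu0 : u 0 = 0)
    (n : ℕ) : (r - s) * u n = u 1 * (r ^ n - s ^ n) := by
  induction n using Nat.twoStepInduction with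
  | zero => simp [hu0]
  | one => ring
  | more n h₀ h₁ => rw [hu]; linear_combination (r + s) * h₁ - r * s * h₀

theorem cassini_of_rec (hu : ∀ n, u (n + 2) = (r + s) * u (n + 1) - r * s * u n) (hu0 : u 0 = 0)
    (n : ℕ) : u (n + 2) * u n - u (n + 1) ^ 2 = -(r * s) ^ n * u 1 ^ 2 := by
  induction n with
  | zero => rw [hu0]; ring
  | succ n ih =>
    rw [pow_succ]
    linear_combination u (n + 1) * hu (n + 1) - u (n + 2) * hu n + r * s * ih

end CharacteristicRoots

theorem summable_of_succ_eq_mul {f ρ : ℕ → ℝ} {l : ℝ} (hρ : Tendsto ρ atTop (𝓝 l)) (hl : |l| < 1)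
    (hf : ∀ n, f (n + 1) = ρ n * f n) : Summable f := by
  obtain ⟨q, hlq, hq⟩ := exists_between hl
  refine summable_of_ratio_norm_eventually_le hq ?_
  filter_upwards [(continuous_abs.tendsto l).comp hρ |>.eventually_lt_const hlq] with n hn
  rw [hf, norm_mul, Real.norm_eq_abs]
  exact mul_le_mul_of_nonneg_right hn.le (norm_nonneg _)

section RealRoots

variable {u : ℕ → ℝ} {r s : ℝ}

theorem rec_succ_ne_zero (hu : ∀ n, u (n + 2) = (r + s) * u (n + 1) - r * s * u n)
    (hu0 : u 0 = 0) (hu1 : u 1 ≠ 0) (hsr : |s| < r) (n : ℕ) : u (n + 1) ≠ 0 := by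
  have hpow : s ^ (n + 1) < r ^ (n + 1) :=
    (le_abs_self _).trans_lt <| abs_pow s _ ▸ pow_lt_pow_left₀ hsr (abs_nonneg s) n.succ_ne_zero
  have h := binet_of_rec hu hu0 (n + 1)
  intro h0
  rw [h0, mul_zero, zero_eq_mul] at h
  exact h.elim hu1 fun h => (sub_ne_zero.mpr hpow.ne') h

theorem tendsto_rec_div_succ (hu : ∀ n, u (n + 2) = (r + s) * u (n + 1) - r * s * u n)
    (hu0 : u 0 = 0) (hu1 : u 1 ≠ 0) (hsr : |s| < r) :
    Tendsto (fun n => u n / u (n + 1)) atTop (𝓝 r⁻¹) := by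
  have hr : 0 < r := (abs_nonneg s).trans_lt hsr
  have hrs : r - s ≠ 0 := sub_ne_zero.mpr ((le_abs_self s).trans_lt hsr).ne'
  set q := s / r
  have hq : |q| < 1 := by rwa [abs_div, abs_of_pos hr, div_lt_one hr]
  have hrq : r * q = s := mul_div_cancel₀ s hr.ne'
  set c := u 1 / (r - s)
  have hc : c ≠ 0 := div_ne_zero hu1 hrs
  have hclosed : ∀ n, u n = c * r ^ n * (1 - q ^ n) := fun n => by
    have hsn : s ^ n = r ^ n * q ^ n := by rw [← mul_pow, hrq]
    calc u n = (r - s) * u n / (r - s) := by field_simp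
      _ = c * r ^ n * (1 - q ^ n) := by rw [binet_of_rec hu hu0 n, hsn]; ring
  have hratio : ∀ n, u n / u (n + 1) = (1 - q ^ n) / (r - s * q ^ n) := fun n => by
    rw [hclosed, hclosed, show c * r ^ (n + 1) * (1 - q ^ (n + 1)) = c * r ^ n * (r - s * q ^ n) by
      rw [← hrq]; ring, mul_div_mul_left _ _ (mul_ne_zero hc (pow_ne_zero n hr.ne'))]
  have hqn := tendsto_pow_atTop_nhds_zero_of_abs_lt_one hq
  have hlim := (tendsto_const_nhds (x := (1 : ℝ)).sub hqn).div
    (tendsto_const_nhds (x := r) |>.sub (hqn.const_mul s)) (by simpa using hr.ne')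
  rw [sub_zero, mul_zero, sub_zero, one_div] at hlim
  simp_rw [hratio]
  exact hlim

theorem hasSum_pow_div_rec (hu : ∀ n, u (n + 2) = (r + s) * u (n + 1) - r * s * u n)
    (hu0 : u 0 = 0) (hu1 : u 1 ≠ 0) (hsr : |s| < r) :
    HasSum (fun n => (r * s) ^ n / (u (n + 1) * u (n + 2))) (r⁻¹ / u 1 ^ 2) := by
  have hr : 0 < r := (abs_nonneg s).trans_lt hsr
  have hne := rec_succ_ne_zero hu hu0 hu1 hsr
  set g : ℕ → ℝ := fun n => u n / u (n + 1) / u 1 ^ 2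
  have hg : Tendsto g atTop (𝓝 (r⁻¹ / u 1 ^ 2)) :=
    (tendsto_rec_div_succ hu hu0 hu1 hsr).div_const _
  have htel : ∀ n, (r * s) ^ n / (u (n + 1) * u (n + 2)) = g (n + 1) - g n := fun n => by
    have hcas := cassini_of_rec hu hu0 n
    simp only [g]
    field_simp [hne n, hne (n + 1), hu1]
    linear_combination hcas
  have hsum : Summable fun n => (r * s) ^ n / (u (n + 1) * u (n + 2)) := by
    have hρ : Tendsto (fun n => r * s * (u (n + 1) / u (n + 2)) * (u (n + 2) / u (n + 3))) atTop
        (𝓝 (r * s * r⁻¹ * r⁻¹)) :=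
      ((tendsto_rec_div_succ hu hu0 hu1 hsr).comp (tendsto_add_atTop_nat 1) |>.const_mul _).mul
        ((tendsto_rec_div_succ hu hu0 hu1 hsr).comp (tendsto_add_atTop_nat 2))
    refine summable_of_succ_eq_mul hρ ?_ fun n => ?_
    · rwa [show r * s * r⁻¹ * r⁻¹ = s / r by field_simp, abs_div, abs_of_pos hr, div_lt_one hr]
    · field_simp [hne n, hne (n + 1), hne (n + 2)]
      ring
  rw [hsum.hasSum_iff_tendsto_nat]
  simp_rw [htel, Finset.sum_range_sub]
  simpa [g, hu0] using hg

end RealRoots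

theorem hasSum_pow_div_rec_of_discrim_pos {u : ℕ → ℝ} {C D Δ : ℝ}
    (hu : ∀ n, u (n + 2) = C * u (n + 1) + D * u n) (hu0 : u 0 = 0) (hu1 : u 1 ≠ 0)
    (hC : 0 < C) (hD : D ≠ 0) (hΔ : Δ = C ^ 2 + 4 * D) (hΔpos : 0 < Δ) :
    HasSum (fun n => (-D) ^ n / (u (n + 1) * u (n + 2))) ((-C + √Δ) / (2 * D) / u 1 ^ 2) := by
  have ht : 0 < √Δ := Real.sqrt_pos.2 hΔpos
  have ht2 : √Δ ^ 2 = C ^ 2 + 4 * D := by rw [Real.sq_sqrt hΔpos.le, hΔ]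
  have hrs : (C + √Δ) / 2 * ((C - √Δ) / 2) = -D := by linear_combination -ht2 / 4
  have hsr : |(C - √Δ) / 2| < (C + √Δ) / 2 := abs_lt.2 ⟨by linarith, by linarith⟩
  have hsum := hasSum_pow_div_rec (fun n => by rw [hu, hrs]; ring) hu0 hu1 hsr
  rw [hrs] at hsum
  convert hsum using 2
  rw [inv_eq_one_div, div_eq_div_iff (mul_ne_zero two_ne_zero hD) (by positivity)]
  linear_combination ht2 / 2

theorem hasSum_threeTermSol_mul_period {a b : ℕ → ℝ} {d : ℕ} (hd : d ≠ 0) (ha : ∀ n, 0 < a n)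
    (hb : ∀ n, 0 < b n) (hpa : ∀ n, a (n + d) = a n) (hpb : ∀ n, b (n + d) = b n) {C D Δ : ℝ}
    (hC : threeTermSol a b 0 1 d * C = threeTermSol a b 0 1 (2 * d))
    (hD : D = (-1) ^ (d - 1) * ∏ i ∈ range d, a i) (hΔ : Δ = C ^ 2 + 4 * D) (hΔpos : 0 < Δ) :
    HasSum (fun n => (-D) ^ n /
        (threeTermSol a b 0 1 ((n + 1) * d) * threeTermSol a b 0 1 ((n + 2) * d)))
      ((-C + √Δ) / (2 * D) / threeTermSol a b 0 1 d ^ 2) := by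
  set P := threeTermSol a b 0 1
  have hPpos : ∀ k, 0 < P ((k + 1) * d) := fun k => by
    obtain ⟨m, hm⟩ := Nat.exists_eq_succ_of_ne_zero (Nat.mul_ne_zero k.succ_ne_zero hd)
    rw [hm]
    exact threeTermSol_zero_one_succ_pos (fun n => (ha n).le) hb m
  have hPd : 0 < P d := by simpa using hPpos 0
  have hrec : ∀ k, P ((k + 2) * d) = C * P ((k + 1) * d) + D * P (k * d) :=
    hD ▸ threeTermSol_mul_period_of_mul_eq hd hpa hpb hPd.ne' hC
  have hCpos : 0 < C := pos_of_mul_pos_right (hC ▸ by simpa using hPpos 1) hPd.le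
  have hDne : D ≠ 0 :=
    hD ▸ mul_ne_zero (pow_ne_zero _ (by norm_num)) (prod_pos fun i _ => ha i).ne'
  simpa using hasSum_pow_div_rec_of_discrim_pos (u := fun k => P (k * d)) hrec
    (by simp [P, threeTermSol]) (by simpa using hPd.ne') hCpos hDne hΔ hΔpos

theorem telescoping_series_two_general
    (d : ℕ) (hd : 1 ≤ d) (a b : ℤ → ℤ)
    (ha : ∀ ν : ℤ, 1 ≤ ν → 0 < a ν) (hb : ∀ ν : ℤ, 1 ≤ ν → 0 < b ν)
    (hpa : ∀ ν : ℤ, 1 ≤ ν → a (ν + d) = a ν) (hpb : ∀ ν : ℤ, 1 ≤ ν → b (ν + d) = b ν)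
    (B : ℤ → ℤ) (hBm1 : B (-1) = 0) (hB0 : B 0 = 1)
    (hBrec : ∀ ν : ℤ, 1 ≤ ν → B ν = b ν * B (ν - 1) + a ν * B (ν - 2))
    (Cd Dd Δ : ℤ)
    (hC : B ((d : ℤ) - 1) * Cd = B (2 * (d : ℤ) - 1))
    (hD : Dd = (-1 : ℤ) ^ (d - 1) * ∏ i ∈ Finset.range d, a ((i : ℤ) + 1))
    (hΔ : Δ = Cd ^ 2 + 4 * Dd) (hΔpos : 0 < Δ)
    (α : ℝ)
    (hα : α = (-(Cd : ℝ) + Real.sqrt (Δ : ℝ)) / (2 * (Dd : ℝ))) :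
    HasSum
      (fun n : ℕ =>
        (-(Dd : ℝ)) ^ n /
          ((B (((n : ℤ) + 1) * d - 1) : ℝ) * (B (((n : ℤ) + 2) * d - 1) : ℝ)))
      (α / (B ((d : ℤ) - 1) : ℝ) ^ 2) := by
  have hBP : ∀ n : ℕ, (B (n - 1) : ℝ) =
      threeTermSol (fun n : ℕ => (a (n + 1) : ℝ)) (fun n => (b (n + 1) : ℝ)) 0 1 n :=
    eq_threeTermSol_of_int_rec (a := fun ν => (a ν : ℝ)) (b := fun ν => (b ν : ℝ))
      (B := fun ν => (B ν : ℝ)) (by simp [hBm1]) (by simp [hB0])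
      fun ν hν => by exact_mod_cast hBrec ν hν
  have hsum := hasSum_threeTermSol_mul_period (a := fun n : ℕ => (a (n + 1) : ℝ))
    (b := fun n => (b (n + 1) : ℝ)) (C := Cd) (D := Dd) (Δ := Δ) (Nat.one_le_iff_ne_zero.mp hd)
    (fun n => by exact_mod_cast ha _ (by omega)) (fun n => by exact_mod_cast hb _ (by omega))
    (fun n => by push_cast; rw [add_right_comm, hpa _ (by omega)])
    (fun n => by push_cast; rw [add_right_comm, hpb _ (by omega)])
    (by rw [← hBP, ← hBP]; push_cast; exact_mod_cast hC) (by exact_mod_cast hD) (by exact_mod_cast hΔ) (by exact_mod_cast hΔpos)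
  rw [hα]
  convert hsum using 3 with n
  · rw [← hBP, ← hBP]
    push_cast
    rfl
  · rw [← hBP]

/-- The telescoping series `∑_{n≥1} (−D_d)^(n−1)/(B_{nd−1}·B_{(n+1)d−1}) = α/B_{d−1}²`
(the series is indexed here by `n : ℕ` via the shift `n ↦ n + 1`). -/
theorem telescoping_series_two
    (d : ℕ) (hd : 1 ≤ d) (a b : ℤ → ℤ)
    (ha : ∀ ν : ℤ, 1 ≤ ν → 0 < a ν) (hb : ∀ ν : ℤ, 1 ≤ ν → 0 < b ν)
    (hpa : ∀ ν : ℤ, 1 ≤ ν → a (ν + d) = a ν) (hpb : ∀ ν : ℤ, 1 ≤ ν → b (ν + d) = b ν)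
    (B : ℤ → ℤ) (hBm1 : B (-1) = 0) (hB0 : B 0 = 1)
    (hBrec : ∀ ν : ℤ, 1 ≤ ν → B ν = b ν * B (ν - 1) + a ν * B (ν - 2))
    (Cd Dd Δ : ℤ)
    (hC : B ((d : ℤ) - 1) * Cd = B (2 * (d : ℤ) - 1))
    (hD : Dd = (-1 : ℤ) ^ (d - 1) * ∏ i ∈ Finset.range d, a ((i : ℤ) + 1))
    (hΔ : Δ = Cd ^ 2 + 4 * Dd) (hΔpos : 0 < Δ)
    (α β : ℝ)
    (hα : α = (-(Cd : ℝ) + Real.sqrt (Δ : ℝ)) / (2 * (Dd : ℝ)))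
    (hβ : β = (-(Cd : ℝ) - Real.sqrt (Δ : ℝ)) / (2 * (Dd : ℝ))) :
    HasSum
      (fun n : ℕ =>
        (-(Dd : ℝ)) ^ n /
          ((B (((n : ℤ) + 1) * d - 1) : ℝ) * (B (((n : ℤ) + 2) * d - 1) : ℝ)))
      (α / (B ((d : ℤ) - 1) : ℝ) ^ 2) :=
  telescoping_series_two_general d hd a b ha hb hpa hpb B hBm1 hB0 hBrec Cd Dd Δ hC hD hΔ hΔpos α hα
end
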